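/- Define Δ(γ) = ρ + θ/4 - (1/4)√(a⁻¹(θ-8r)(4γ²+θa)) for γ ≥ 0. Then sup{γ ≥ 0 : Δ(γ) > 0} = √(2a(r + ρ + 2(2r+ρ)²/(θ-8r))). -/

import Mathlib

noncomputable def DeltaFn (θ r a ρ γ : ℝ) : ℝ :=
  ρ + θ/4 - (1/4) * Real.sqrt (a⁻¹ * (θ - 8*r) * (4*γ^2 + θ*a))

theorem stmt9 (θ r a ρ : ℝ) (hr : 0 ≤ r) (hθ : 8*r < θ) (ha : 0 < a) (hρ : 0 ≤ ρ)
    (hrρ : 0 < r + ρ) :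
    IsLUB {γ : ℝ | 0 ≤ γ ∧ 0 < DeltaFn θ r a ρ γ}
      (Real.sqrt (2*a*(r + ρ + 2*(2*r + ρ)^2/(θ - 8*r)))) := by
  set c := Real.sqrt (2*a*(r + ρ + 2*(2*r + ρ)^2/(θ - 8*r))) with hc
  have ht : 0 < θ - 8*r := by linarith
  have hin : 0 < 2*a*(r + ρ + 2*(2*r + ρ)^2/(θ - 8*r)) := by
    have h0 : 0 ≤ 2*(2*r + ρ)^2/(θ - 8*r) := by positivity
    have h1 : 0 < r + ρ + 2*(2*r + ρ)^2/(θ - 8*r) := by linarith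
    positivity
  have hcpos : 0 < c := Real.sqrt_pos.mpr hin
  have hcsq : c^2 = 2*a*(r + ρ + 2*(2*r + ρ)^2/(θ - 8*r)) := by
    rw [hc, Real.sq_sqrt hin.le]
  have hcsq' : c^2 * (θ - 8*r) = 2*a*((r + ρ)*(θ - 8*r) + 2*(2*r + ρ)^2) := by
    field_simp [ne_of_gt ht] at hcsq ⊢
    rw [hcsq]
    field_simp [ne_of_gt (by linarith : (0:ℝ) < θ - r*8)] <;> ring
  have hpos4 : 0 < 4*ρ + θ := by linarith
  have key : ∀ γ : ℝ, 0 ≤ γ → (0 < DeltaFn θ r a ρ γ ↔ γ < c) := by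
    intro γ hγ
    unfold DeltaFn
    have hXeq : a⁻¹ * (θ - 8*r) * (4*γ^2 + θ*a) * a = (θ - 8*r) * (4*γ^2 + θ*a) := by
      field_simp
    constructor
    · intro h
      have hs : Real.sqrt (a⁻¹ * (θ - 8*r) * (4*γ^2 + θ*a)) < 4*ρ + θ := by linarith
      have hX : a⁻¹ * (θ - 8*r) * (4*γ^2 + θ*a) < (4*ρ + θ)^2 :=
        (Real.sqrt_lt' hpos4).mp hs
      have hX2 : (θ - 8*r) * (4*γ^2 + θ*a) < (4*ρ + θ)^2 * a := by
        nlinarith [mul_lt_mul_of_pos_right hX ha]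
      have hγ2 : γ^2 < c^2 := by nlinarith [hcsq', ht, ha]
      exact lt_of_pow_lt_pow_left₀ 2 hcpos.le hγ2
    · intro h
      have hγ2 : γ^2 < c^2 := by nlinarith
      have hX2 : (θ - 8*r) * (4*γ^2 + θ*a) < (4*ρ + θ)^2 * a := by
        nlinarith [hcsq', ht, ha]
      have hX : a⁻¹ * (θ - 8*r) * (4*γ^2 + θ*a) < (4*ρ + θ)^2 := by
        have hinv : 0 < a⁻¹ := inv_pos.mpr ha
        nlinarith [mul_lt_mul_of_pos_right hX2 hinv, mul_inv_cancel₀ (ne_of_gt ha)]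
      have hs := (Real.sqrt_lt' hpos4).mpr hX
      linarith
  have hset : {γ : ℝ | 0 ≤ γ ∧ 0 < DeltaFn θ r a ρ γ} = Set.Ico 0 c := by
    ext γ
    simp only [Set.mem_setOf_eq, Set.mem_Ico]
    exact and_congr_right fun hγ => key γ hγ
  rw [hset]
  exact isLUB_Ico hcpos
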